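/- Let (G,q) be a slightly degenerate pre-metric group and let u be the nontrivial element of Ker b. Then there exists a subgroup M ⊆ G such that (M, q|_M) is a metric group, the map M × Ker b → G, (m,x) ↦ m + x, is a group isomorphism, and q(m+x) = q(m)·q(x) for all m ∈ M and x ∈ Ker b. In other words, (G,q) is the orthogonal direct sum of a metric group and the pre-metric group (ℤ/2ℤ, n ↦ (-1)ⁿ). -/

import Mathlib

/-- The bicharacter associated with a `kˣ`-valued function `q` on `G`:
`b(g,h) = q(g+h) · q(g)⁻¹ · q(h)⁻¹`. -/
def bchar {k : Type*} [Field k] {G : Type*} [AddCommGroup G] (q : G → kˣ) (g h : G) : kˣ :=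
  q (g + h) * (q g)⁻¹ * (q h)⁻¹

/-- `q : G → kˣ` is a quadratic form: `q (-g) = q g` for all `g`, and the associated
function `bchar q` is bimultiplicative. -/
structure IsQuadForm {k : Type*} [Field k] {G : Type*} [AddCommGroup G] (q : G → kˣ) : Prop where
  map_neg : ∀ g : G, q (-g) = q g
  bchar_add_left : ∀ g₁ g₂ h : G, bchar q (g₁ + g₂) h = bchar q g₁ h * bchar q g₂ h
  bchar_add_right : ∀ g h₁ h₂ : G, bchar q g (h₁ + h₂) = bchar q g h₁ * bchar q g h₂

/-- The Gauss sum `τ⁺(G,q) = ∑_{g ∈ G} q(g)`, as an element of `k`. -/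
noncomputable def tauPlus {k : Type*} [Field k] {G : Type*} [AddCommGroup G] (q : G → kˣ) : k :=
  ∑ᶠ g : G, (q g : k)

/-- The Gauss sum `τ⁻(G,q) = ∑_{g ∈ G} q(g)⁻¹`, as an element of `k`. -/
noncomputable def tauMinus {k : Type*} [Field k] {G : Type*} [AddCommGroup G] (q : G → kˣ) : k :=
  ∑ᶠ g : G, (((q g)⁻¹ : kˣ) : k)

/-- Non-degeneracy of (the bicharacter associated with) `q` : the map
`g ↦ b(g, ·)` from `G` to `Hom(G, kˣ)` is injective. -/
def Nondeg {k : Type*} [Field k] {G : Type*} [AddCommGroup G] (q : G → kˣ) : Prop :=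
  Function.Injective fun g : G => fun h : G => bchar q g h

/-- Isomorphism of pre-metric groups: a group isomorphism `φ : G₁ ≃ G₂`
with `q₂ ∘ φ = q₁`. -/
def PMIso {k : Type*} [Field k] {G₁ : Type*} [AddCommGroup G₁] {G₂ : Type*} [AddCommGroup G₂]
    (q₁ : G₁ → kˣ) (q₂ : G₂ → kˣ) : Prop :=
  ∃ φ : G₁ ≃+ G₂, ∀ g : G₁, q₂ (φ g) = q₁ g

/-! The kernel element `u` has order two, since `u + u` lies in `Ker b` and differs from `u`.
It is not a double: if `2g = u` then `g + u = -g`, so `q g = q (g + u) = q g · q u = -q g`.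
Hence some homomorphism `Φ : G → ℤ/2` sends `u` to `1`, and `M = ker Φ` is a complement of
`Ker b = {0, u}`. As `G = M + Ker b`, an element of `M` orthogonal to `M` lies in `Ker b ∩ M = 0`,
so `q|_M` is non-degenerate. -/

theorem zmod_two_eq_zero_or_eq_one (a : ZMod 2) : a = 0 ∨ a = 1 := by
  revert a; decide

theorem exists_addMonoidHom_zmod_two_apply_eq_one {G : Type*} [AddCommGroup G] {u : G}
    (hu : ∀ g : G, 2 • g ≠ u) : ∃ Φ : G →+ ZMod 2, Φ u = 1 := by
  let H := (nsmulAddMonoidHom 2 : G →+ G).range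
  let _ : Module (ZMod 2) (G ⧸ H) := QuotientAddGroup.zmodModule fun g => ⟨g, rfl⟩
  have hu_ne : (u : G ⧸ H) ≠ 0 := by
    rw [ne_eq, QuotientAddGroup.eq_zero_iff]
    rintro ⟨g, hg⟩
    exact hu g hg
  obtain ⟨φ, hφ⟩ : ∃ φ : Module.Dual (ZMod 2) (G ⧸ H), φ u ≠ 0 := by
    by_contra! h
    exact hu_ne ((Module.forall_dual_apply_eq_zero_iff (ZMod 2) _).mp h)
  exact ⟨φ.toAddMonoidHom.comp (QuotientAddGroup.mk' H),
    (zmod_two_eq_zero_or_eq_one _).resolve_left hφ⟩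

theorem bijective_add_of_zmod_two {G : Type*} [AddCommGroup G] {Φ : G →+ ZMod 2} {u : G}
    (hΦu : Φ u = 1) (huu : u + u = 0) {P : G → Prop} (hP0 : P 0) (hPu : P u)
    (hP : ∀ x, P x → x = 0 ∨ x = u) :
    Function.Bijective fun mx : Φ.ker × {x // P x} => (mx.1 : G) + mx.2 := by
  have hΦ_inj : ∀ x y, P x → P y → Φ x = Φ y → x = y := by
    intro x y hx hy hxy
    rcases hP x hx with rfl | rfl <;> rcases hP y hy with rfl | rfl <;> simp_all
  constructor
  · rintro ⟨m, x⟩ ⟨m', x'⟩ (h : (m : G) + x = m' + x')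
    have hx : (x : G) = x' := hΦ_inj _ _ x.2 x'.2 <| by
      simpa [AddMonoidHom.mem_ker.mp m.2, AddMonoidHom.mem_ker.mp m'.2] using congrArg Φ h
    have hm : (m : G) = m' := add_right_cancel (hx ▸ h)
    exact Prod.ext (Subtype.ext hm) (Subtype.ext hx)
  · intro g
    rcases zmod_two_eq_zero_or_eq_one (Φ g) with hg | hg
    · exact ⟨(⟨g, hg⟩, ⟨0, hP0⟩), add_zero g⟩
    · refine ⟨(⟨g + u, ?_⟩, ⟨u, hPu⟩), ?_⟩
      · rw [AddMonoidHom.mem_ker, map_add, hg, hΦu]; decide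
      · simp [add_assoc, huu]

section

variable {k : Type*} [Field k] {G : Type*} [AddCommGroup G]

theorem bchar_comm (q : G → kˣ) (g h : G) : bchar q g h = bchar q h g := by
  rw [bchar, bchar, add_comm g h, mul_right_comm]

theorem bchar_eq_one_iff {q : G → kˣ} {g h : G} : bchar q g h = 1 ↔ q (g + h) = q g * q h := by
  rw [bchar, mul_assoc, ← mul_inv, mul_inv_eq_one]

namespace IsQuadForm

variable {q : G → kˣ}

theorem comp_addMonoidHom (hq : IsQuadForm q) {H : Type*} [AddCommGroup H] (f : H →+ G) :
    IsQuadForm fun h => q (f h) := by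
  have hb : ∀ a b, bchar (fun h => q (f h)) a b = bchar q (f a) (f b) := by
    simp [bchar]
  refine ⟨fun g => ?_, fun g₁ g₂ h => ?_, fun g h₁ h₂ => ?_⟩
  · simp only [_root_.map_neg, hq.map_neg]
  · simp only [hb, map_add, hq.bchar_add_left]
  · simp only [hb, map_add, hq.bchar_add_right]

theorem bchar_sub_left (hq : IsQuadForm q) (g₁ g₂ h : G) :
    bchar q (g₁ - g₂) h = bchar q g₁ h * (bchar q g₂ h)⁻¹ :=
  eq_mul_inv_of_mul_eq <| by rw [← hq.bchar_add_left, sub_add_cancel]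

theorem two_nsmul_ne_of_forall_bchar_eq_one (hq : IsQuadForm q) {u : G}
    (hu : ∀ h, bchar q u h = 1) (huu : u + u = 0) (hqu : q u ≠ 1) (g : G) : 2 • g ≠ u := by
  rintro rfl
  have hgu : g + 2 • g = -g := by
    rw [eq_neg_iff_add_eq_zero, ← huu]; abel
  have hsplit := bchar_eq_one_iff.mp ((bchar_comm q _ _).trans (hu g))
  rw [hgu, hq.map_neg, left_eq_mul] at hsplit
  exact hqu hsplit

theorem nondeg_of_complement_radical (hq : IsQuadForm q) (M : AddSubgroup G)
    (hspan : ∀ g : G, ∃ m ∈ M, ∀ h, bchar q (g - m) h = 1)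
    (hdisj : ∀ m ∈ M, (∀ h, bchar q m h = 1) → m = 0) :
    Nondeg fun m : M => q m := by
  intro a b hab
  have hM : ∀ m ∈ M, bchar q (a - b) m = 1 := fun m hm => by
    rw [hq.bchar_sub_left, mul_inv_eq_one]
    exact congrFun hab ⟨m, hm⟩
  refine Subtype.ext (sub_eq_zero.mp (hdisj _ (sub_mem a.2 b.2) fun g => ?_))
  obtain ⟨m, hm, hgm⟩ := hspan g
  calc bchar q (a - b) g = bchar q (a - b) m * bchar q (g - m) (a - b) := by
        rw [← bchar_comm q (a - b), ← hq.bchar_add_right, add_sub_cancel]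
    _ = 1 := by rw [hM m hm, hgm, one_mul]

end IsQuadForm

end

theorem slightly_degenerate_orthogonal_splitting_general
    {k : Type*} [Field k] [CharZero k]
    {G : Type*} [AddCommGroup G]
    (q : G → kˣ) (hq : IsQuadForm q)
    (u : G) (hu : u ≠ 0) (hu_ker : ∀ h : G, bchar q u h = 1) (hqu : q u = -1)
    (hker : ∀ g : G, (∀ h : G, bchar q g h = 1) → g = 0 ∨ g = u) :
    ∃ M : AddSubgroup G,
      IsQuadForm (fun m : ↥M => q (m : G)) ∧
      Nondeg (fun m : ↥M => q (m : G)) ∧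
      Function.Bijective
        (fun mx : ↥M × {x : G // ∀ h : G, bchar q x h = 1} =>
          (mx.1 : G) + (mx.2 : G)) ∧
      (∀ (m : ↥M) (x : G), (∀ h : G, bchar q x h = 1) → q ((m : G) + x) = q (m : G) * q x) := by
  have hzero_ker : ∀ h, bchar q 0 h = 1 := fun h => by
    simpa using hq.bchar_add_left 0 0 h
  have huu : u + u = 0 := by
    refine (hker _ fun h => ?_).resolve_right fun h => hu (by simpa using h)
    rw [hq.bchar_add_left, hu_ker, one_mul]
  obtain ⟨Φ, hΦu⟩ := exists_addMonoidHom_zmod_two_apply_eq_one <|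
    hq.two_nsmul_ne_of_forall_bchar_eq_one hu_ker huu (hqu ▸ neg_units_ne_self 1)
  have hsplit := bijective_add_of_zmod_two hΦu huu hzero_ker hu_ker hker
  refine ⟨Φ.ker, hq.comp_addMonoidHom Φ.ker.subtype, ?_, hsplit,
    fun m x hx => bchar_eq_one_iff.mp ((bchar_comm q _ _).trans (hx m))⟩
  refine hq.nondeg_of_complement_radical _ (fun g => ?_) fun m hm hrad => ?_
  · obtain ⟨⟨m, x⟩, rfl⟩ := hsplit.2 g
    exact ⟨m, m.2, by simpa using x.2⟩
  · refine (hker m hrad).resolve_right ?_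
    rintro rfl
    simp [hΦu] at hm

/-- A slightly degenerate pre-metric group `(G,q)` (i.e. `Ker b = {0,u}`
with `u ≠ 0` and `q(u) = -1`) is the orthogonal direct sum of a metric group `M` and
`Ker b ≅ (ℤ/2ℤ, n ↦ (-1)ⁿ)`: there is a subgroup `M ⊆ G` such that `(M, q|_M)` is a
metric group, `(m,x) ↦ m + x` is a bijection `M × Ker b → G`, and
`q(m + x) = q(m)·q(x)` for `m ∈ M`, `x ∈ Ker b`. -/
theorem slightly_degenerate_orthogonal_splitting
    {k : Type*} [Field k] [IsAlgClosed k] [CharZero k]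
    {G : Type*} [AddCommGroup G] [Finite G]
    (q : G → kˣ) (hq : IsQuadForm q)
    (u : G) (hu : u ≠ 0) (hu_ker : ∀ h : G, bchar q u h = 1) (hqu : q u = -1)
    (hker : ∀ g : G, (∀ h : G, bchar q g h = 1) → g = 0 ∨ g = u) :
    ∃ M : AddSubgroup G,
      IsQuadForm (fun m : ↥M => q (m : G)) ∧
      Nondeg (fun m : ↥M => q (m : G)) ∧
      Function.Bijective
        (fun mx : ↥M × {x : G // ∀ h : G, bchar q x h = 1} =>
          (mx.1 : G) + (mx.2 : G)) ∧
      (∀ (m : ↥M) (x : G), (∀ h : G, bchar q x h = 1) → q ((m : G) + x) = q (m : G) * q x) :=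
  slightly_degenerate_orthogonal_splitting_general q hq u hu hu_ker hqu hker
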